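/- arXiv:math/0607434 — 2 statements merged into one kernel-verified Lean document; each statement's English description precedes it below -/
import Mathlib

section
/- Theorem A, item 1: Let F be a physical random perturbation of a diffeomorphism f of a compact boundaryless finite-dimensional manifold M, and let {Λ_i}_{i=1}^N (N ∈ ℕ ∪ {∞}) be a family of pairwise disjoint attractors for f such that (Condition A) the union of the basins of attraction ⋃_{i=1}^N W^s(Λ_i) has full m-measure in M, and (Condition B) each Λ_i is stochastically stable with respect to F, supporting the f-invariant probability measure μ_i. Then for m-almost every x ∈ M there exist ε_x > 0 and an index i = i(x) ∈ {1,…,N} such that for every ε ∈ (0,ε_x) the mean sojourn time μ^ε(x) of the random orbits of x exists, equals the unique physical measure μ_i^ε localized near Λ_i, and μ^ε(x) → μ_i in the weak* topology as ε → 0⁺. -/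
open MeasureTheory Metric Filter Topology Set
open scoped Manifold ENNReal

noncomputable section

/-- The parameter space `ℝⁿ` of the random perturbations. -/
abbrev Par (n : ℕ) : Type := EuclideanSpace ℝ (Fin n)

/-- Normalized Lebesgue measure on the closed `ε`-ball of `ℝⁿ`. -/
noncomputable def ballMeasure (n : ℕ) (ε : ℝ) : Measure (Par n) :=
  (volume (closedBall (0 : Par n) ε))⁻¹ • volume.restrict (closedBall (0 : Par n) ε)

/-- The perturbation space `Δ_ε`: sequences of parameter vectors of norm at most `ε`. -/
def Delta (n : ℕ) (ε : ℝ) : Set (ℕ → Par n) := {t | ∀ j, ‖t j‖ ≤ ε}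

/-- The perturbed iterates `f^j(x, t̲) = f_{t_j} ∘ ⋯ ∘ f_{t_1} (x)`. -/
def iterP {M : Type*} {n : ℕ} (F : M → Par n → M) : ℕ → M → (ℕ → Par n) → M
  | 0, x, _ => x
  | k + 1, x, t => F (iterP F k x t) (t k)

/-- `ν` is the infinite product `ν_ε^∞` of the normalized Lebesgue measures on the closed
`ε`-ball, characterized as the probability measure with the correct finite-dimensional
marginals on cylinder sets. -/
def IsProductNoise {n : ℕ} (ε : ℝ) (ν : Measure (ℕ → Par n)) : Prop :=
  IsProbabilityMeasure ν ∧
    ∀ (k : ℕ) (s : Fin k → Set (Par n)), (∀ i, MeasurableSet (s i)) →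
      ν {t | ∀ i : Fin k, t (i : ℕ) ∈ s i} = ∏ i, ballMeasure n ε (s i)

/-- The support of a measure: the points all of whose open neighborhoods have
positive measure. -/
def mSupp {M : Type*} [TopologicalSpace M] [MeasurableSpace M] (μ : Measure M) : Set M :=
  {x | ∀ U : Set M, IsOpen U → x ∈ U → 0 < μ U}

/-- The time averages of every continuous function along the random orbit of `x` driven by
the perturbation vector `t̲` converge to the space average w.r.t. `μ`, i.e. the empirical
measures `(1/N) ∑_{j<N} δ_{f^j(x,t̲)}` converge weakly* to `μ`. -/
def AvgTendsto {M : Type*} [TopologicalSpace M] [MeasurableSpace M] {n : ℕ}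
    (F : M → Par n → M) (x : M) (t : ℕ → Par n) (μ : Measure M) : Prop :=
  ∀ φ : C(M, ℝ),
    Tendsto (fun N : ℕ => (N : ℝ)⁻¹ * ∑ j ∈ Finset.range N, φ (iterP F j x t))
      atTop (𝓝 (∫ y, φ y ∂μ))

/-- The basin `B(μ)` of a measure `μ` under the noise `ν`. -/
def measBasin {M : Type*} [TopologicalSpace M] [MeasurableSpace M] {n : ℕ}
    (ν : Measure (ℕ → Par n)) (F : M → Par n → M) (μ : Measure M) : Set M :=
  {x | ∀ᵐ t ∂ν, AvgTendsto F x t μ}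

/-- A physical measure for the perturbation with noise `ν`: a probability measure whose
basin has positive volume. -/
def IsPhysicalMeasure {M : Type*} [TopologicalSpace M] [MeasurableSpace M] {n : ℕ}
    (m : Measure M) (ν : Measure (ℕ → Par n)) (F : M → Par n → M) (μ : Measure M) : Prop :=
  IsProbabilityMeasure μ ∧ 0 < m (measBasin ν F μ)

/-- The mean sojourn time of the random orbits of `x` exists and equals `μ`:
`(1/N) ∑_{j<N} f^j(x,·)_* ν → μ` weakly*. -/
def SojournTime {M : Type*} [TopologicalSpace M] [MeasurableSpace M] {n : ℕ}
    (ν : Measure (ℕ → Par n)) (F : M → Par n → M) (x : M) (μ : Measure M) : Prop :=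
  ∀ φ : C(M, ℝ),
    Tendsto
      (fun N : ℕ => (N : ℝ)⁻¹ * ∑ j ∈ Finset.range N, ∫ t, φ (iterP F j x t) ∂ν)
      atTop (𝓝 (∫ y, φ y ∂μ))

/-- The mean sojourn time of the whole random system exists and equals `μ`. -/
def GlobalSojourn {M : Type*} [TopologicalSpace M] [MeasurableSpace M] {n : ℕ}
    (m : Measure M) (ν : Measure (ℕ → Par n)) (F : M → Par n → M) (μ : Measure M) : Prop :=
  ∀ φ : C(M, ℝ),
    Tendsto
      (fun N : ℕ => (N : ℝ)⁻¹ *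
        ∑ j ∈ Finset.range N, ∫ x, (∫ t, φ (iterP F j x t) ∂ν) ∂m)
      atTop (𝓝 (∫ y, φ y ∂μ))

/-- The skew product `S_ε (x, t̲) = (f_{t₁} x, σ t̲)`. -/
def skewProd {M : Type*} {n : ℕ} (F : M → Par n → M) :
    M × (ℕ → Par n) → M × (ℕ → Par n) :=
  fun p => (F p.1 (p.2 0), fun j => p.2 (j + 1))

/-- An attractor of `f`: a compact invariant set with a trapping neighborhood `U` with
`Λ = ⋂_{k ≥ 1} f^k (closure U)` and a point with dense forward orbit. -/
structure IsAttractor {M : Type*} [MetricSpace M] (f : M → M) (Λ : Set M) : Prop where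
  compact : IsCompact Λ
  invariant : f '' Λ = Λ
  trapped : ∃ U : Set M, IsOpen U ∧ Λ ⊆ U ∧ f '' closure U ⊆ U ∧
    Λ = ⋂ k : ℕ, f^[k + 1] '' closure U
  transitive : ∃ x ∈ Λ, closure (range fun k : ℕ => f^[k + 1] x) = Λ

/-- The basin of attraction `W^s(Λ)`. -/
def basinAttr {M : Type*} [MetricSpace M] (f : M → M) (Λ : Set M) : Set M :=
  {x | Tendsto (fun k => infDist (f^[k] x) Λ) atTop (𝓝 0)}

/-- `F`, together with the noise measures `ν ε`, the thresholds `K ε` and the radii `ξ ε`,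
is a physical random perturbation of the diffeomorphism `f` of the compact boundaryless
manifold `M` with reference (Riemannian volume) measure `m`, for noise levels in `(0, ε₀)`. -/
structure IsPhysPert (d : ℕ) {n : ℕ} {M : Type*} [MetricSpace M] [CompactSpace M]
    [ChartedSpace (EuclideanSpace ℝ (Fin d)) M] [IsManifold (𝓡 d) (⊤ : ℕ∞) M]
    [MeasurableSpace M] [BorelSpace M]
    (f : M → M) (m : Measure M) (F : M → Par n → M)
    (ν : ℝ → Measure (ℕ → Par n)) (K : ℝ → ℕ) (ξ : ℝ → ℝ) (ε₀ : ℝ) : Prop where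
  eps0_mem : ε₀ ∈ Ioo (0 : ℝ) 1
  smooth : ContMDiff ((𝓡 d).prod (𝓘(ℝ, Par n))) (𝓡 d) 1 (Function.uncurry F)
  diffeo : ∀ t : Par n, ‖t‖ < 1 →
    ∃ g : Diffeomorph (𝓡 d) (𝓡 d) M M 1, ∀ x, g x = F x t
  base : ∀ x : M, F x 0 = f x
  noise : ∀ ε ∈ Ioo (0 : ℝ) ε₀, IsProductNoise ε (ν ε)
  xi_pos : ∀ ε ∈ Ioo (0 : ℝ) ε₀, 0 < ξ ε
  cover : ∀ ε ∈ Ioo (0 : ℝ) ε₀, ∀ x : M, ∀ j ≥ K ε,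
    ball (f^[j] x) (ξ ε) ⊆ (fun t => iterP F j x t) '' Delta n ε
  absCont : ∀ ε ∈ Ioo (0 : ℝ) ε₀, ∀ x : M, ∀ k ≥ K ε,
    (ν ε).map (fun t => iterP F k x t) ≪ m

/-- The family `ε ↦ με ε`, `0 < ε < εthr`, of localized physical measures near the
attractor `Λ`, inside a completely forward invariant open neighborhood `U` of `Λ`
(the conclusion of the localization proposition). -/
def IsLocalizedPhysFamily {M : Type*} [MetricSpace M] [MeasurableSpace M] {n : ℕ}
    (F : M → Par n → M) (ν : ℝ → Measure (ℕ → Par n))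
    (Λ U : Set M) (εthr : ℝ) (με : ℝ → Measure M) : Prop :=
  0 < εthr ∧ IsOpen U ∧ Λ ⊆ U ∧
    ∀ ε ∈ Ioo (0 : ℝ) εthr,
      IsProbabilityMeasure (με ε) ∧ Λ ⊆ mSupp (με ε) ∧ mSupp (με ε) ⊆ U ∧
      (∀ t : Par n, ‖t‖ ≤ ε → (fun x => F x t) '' closure U ⊆ U) ∧
      ∀ x ∈ U, ∀ᵐ t ∂(ν ε), AvgTendsto F x t (με ε)

/-- Weak* convergence `με ε → μ` as `ε → 0⁺`. -/
def WeakStarAtZero {M : Type*} [TopologicalSpace M] [MeasurableSpace M]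
    (με : ℝ → Measure M) (μ : Measure M) : Prop :=
  ∀ φ : C(M, ℝ),
    Tendsto (fun ε => ∫ y, φ y ∂(με ε)) (𝓝[>] (0 : ℝ)) (𝓝 (∫ y, φ y ∂μ))

/-- `Λ` is a stochastically stable attractor: it carries an `f`-invariant probability
measure `μ` with `supp μ = Λ` to which the localized physical measures `με ε` converge
weakly* as the noise level tends to zero. -/
def IsStochasticallyStable {M : Type*} [MetricSpace M] [MeasurableSpace M]
    (f : M → M) (Λ : Set M) (μ : Measure M) (με : ℝ → Measure M) : Prop :=
  IsProbabilityMeasure μ ∧ μ.map f = μ ∧ mSupp μ = Λ ∧ WeakStarAtZero με μ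

/-! ### Auxiliary lemmas -/

section Aux

open Function

/-- The normalized Lebesgue measure on the closed `ε`-ball is a probability measure. -/
lemma ballMeasure_isProbability (n : ℕ) {ε : ℝ} (hε : 0 < ε) :
    IsProbabilityMeasure (ballMeasure n ε) := by
  constructor
  have hpos : volume (closedBall (0 : Par n) ε) ≠ 0 :=
    (measure_closedBall_pos volume 0 hε).ne'
  have hfin : volume (closedBall (0 : Par n) ε) ≠ ⊤ := measure_closedBall_lt_top.ne
  simp [ballMeasure, Measure.smul_apply, Measure.restrict_apply_univ, smul_eq_mul,
    ENNReal.inv_mul_cancel hpos hfin]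

lemma ballMeasure_closedBall (n : ℕ) {ε : ℝ} (hε : 0 < ε) :
    ballMeasure n ε (closedBall (0 : Par n) ε) = 1 := by
  have hpos : volume (closedBall (0 : Par n) ε) ≠ 0 :=
    (measure_closedBall_pos volume 0 hε).ne'
  have hfin : volume (closedBall (0 : Par n) ε) ≠ ⊤ := measure_closedBall_lt_top.ne
  simp [ballMeasure, Measure.smul_apply, Measure.restrict_apply measurableSet_closedBall,
    smul_eq_mul, ENNReal.inv_mul_cancel hpos hfin]

/-- The class of initial-segment rectangle cylinders. -/
def Cyl (n : ℕ) : Set (Set (ℕ → Par n)) :=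
  {S | ∃ (k : ℕ) (s : Fin k → Set (Par n)),
    (∀ i, MeasurableSet (s i)) ∧ S = {t | ∀ i : Fin k, t (i : ℕ) ∈ s i}}

lemma univ_mem_cyl (n : ℕ) : (univ : Set (ℕ → Par n)) ∈ Cyl n := by
  refine ⟨0, fun i => univ, fun i => MeasurableSet.univ, ?_⟩
  ext t; simp

lemma cyl_measurableSet {n : ℕ} {S : Set (ℕ → Par n)} (hS : S ∈ Cyl n) : MeasurableSet S := by
  obtain ⟨k, s, hs, rfl⟩ := hS
  rw [Set.setOf_forall]
  exact MeasurableSet.iInter fun i => measurable_pi_apply (i : ℕ) (hs i)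

/-- Padding a rectangle cylinder to a longer initial segment. -/
lemma cyl_pad {n : ℕ} {k K : ℕ} (hkK : k ≤ K) (s : Fin k → Set (Par n)) :
    {t : ℕ → Par n | ∀ i : Fin k, t (i : ℕ) ∈ s i} =
      {t | ∀ i : Fin K, t (i : ℕ) ∈
        (if h : (i : ℕ) < k then s ⟨i, h⟩ else univ)} := by
  ext t
  simp only [mem_setOf_eq]
  constructor
  · intro ht i
    by_cases h : (i : ℕ) < k
    · simpa [h] using ht ⟨i, h⟩
    · simp [h]
  · intro ht i
    have := ht ⟨(i : ℕ), lt_of_lt_of_le i.isLt hkK⟩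
    simpa [i.isLt] using this

lemma isPiSystem_cyl (n : ℕ) : IsPiSystem (Cyl n) := by
  rintro S ⟨k, s, hs, rfl⟩ T ⟨l, u, hu, rfl⟩ -
  refine ⟨max k l,
    fun i => (if h : (i : ℕ) < k then s ⟨i, h⟩ else univ) ∩
      (if h : (i : ℕ) < l then u ⟨i, h⟩ else univ), ?_, ?_⟩
  · intro i
    refine MeasurableSet.inter ?_ ?_ <;>
      · split
        · apply_assumption
        · exact MeasurableSet.univ
  · rw [cyl_pad (le_max_left k l) s, cyl_pad (le_max_right k l) u]
    ext t
    simp only [mem_inter_iff, mem_setOf_eq, Set.mem_inter_iff]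
    constructor
    · rintro ⟨h1, h2⟩ i; exact ⟨h1 i, h2 i⟩
    · intro h; exact ⟨fun i => (h i).1, fun i => (h i).2⟩

lemma isCountablySpanning_cyl (n : ℕ) : IsCountablySpanning (Cyl n) :=
  ⟨fun _ => univ, fun _ => univ_mem_cyl n, iUnion_const univ⟩

/-- The product σ-algebra on `ℕ → Par n` is generated by the rectangle cylinders. -/
lemma pi_eq_generateFrom_cyl (n : ℕ) :
    (inferInstance : MeasurableSpace (ℕ → Par n)) =
      MeasurableSpace.generateFrom (Cyl n) := by
  refine le_antisymm ?_ (MeasurableSpace.generateFrom_le fun S hS => cyl_measurableSet hS)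
  have heval : ∀ j : ℕ, @Measurable _ _ (MeasurableSpace.generateFrom (Cyl n)) _
      (fun t : ℕ → Par n => t j) := by
    intro j u hu
    apply MeasurableSpace.measurableSet_generateFrom
    refine ⟨j + 1, fun i => if (i : ℕ) = j then u else univ, ?_, ?_⟩
    · intro i
      dsimp only
      split
      · exact hu
      · exact MeasurableSet.univ
    · ext t
      simp only [mem_preimage, mem_setOf_eq]
      constructor
      · intro ht i
        by_cases h : (i : ℕ) = j
        · simpa [h] using ht
        · simp [h]
      · intro ht
        have := ht ⟨j, Nat.lt_succ_self j⟩
        simpa using this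
  have h : @Measurable (ℕ → Par n) (ℕ → Par n)
      (MeasurableSpace.generateFrom (Cyl n)) MeasurableSpace.pi id :=
    (@measurable_pi_iff (ℕ → Par n) ℕ (fun _ => Par n)
      (MeasurableSpace.generateFrom (Cyl n)) _ id).mpr fun j => heval j
  rw [MeasurableSpace.le_def]
  intro S hS
  exact h hS

/-- The measurable "initial segment / shift" decomposition map. -/
def initShift (n k : ℕ) : (ℕ → Par n) → (Fin k → Par n) × (ℕ → Par n) :=
  fun t => (fun i : Fin k => t (i : ℕ), fun j => t (k + j))

lemma measurable_initShift (n k : ℕ) : Measurable (initShift n k) :=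
  Measurable.prodMk
    (measurable_pi_lambda _ fun i => measurable_pi_apply (i : ℕ))
    (measurable_pi_lambda _ fun j => measurable_pi_apply (k + j))

/-- The fundamental decomposition: the push-forward of the product noise under
`initShift` is the product of the `k`-fold product of ball measures with the noise. -/
lemma map_initShift {n : ℕ} {ε : ℝ} (hε : 0 < ε) {ν : Measure (ℕ → Par n)}
    (hν : IsProductNoise ε ν) (k : ℕ) :
    ν.map (initShift n k) = (Measure.pi fun _ : Fin k => ballMeasure n ε).prod ν := by
  haveI : IsProbabilityMeasure (ballMeasure n ε) := ballMeasure_isProbability n hε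
  haveI : IsProbabilityMeasure ν := hν.1
  haveI : IsProbabilityMeasure (ν.map (initShift n k)) :=
    Measure.isProbabilityMeasure_map (measurable_initShift n k).aemeasurable
  set RectK : Set (Set (Fin k → Par n)) :=
    univ.pi '' univ.pi fun _ => {s : Set (Par n) | MeasurableSet s} with hRectK
  have hgen : (inferInstance : MeasurableSpace ((Fin k → Par n) × (ℕ → Par n))) =
      MeasurableSpace.generateFrom (image2 (· ×ˢ ·) RectK (Cyl n)) := by
    have h1 : (MeasurableSpace.pi : MeasurableSpace (Fin k → Par n)) =
        MeasurableSpace.generateFrom RectK := generateFrom_pi.symm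
    have h2 : (MeasurableSpace.pi : MeasurableSpace (ℕ → Par n)) =
        MeasurableSpace.generateFrom (Cyl n) := pi_eq_generateFrom_cyl n
    calc (inferInstance : MeasurableSpace ((Fin k → Par n) × (ℕ → Par n)))
        = @Prod.instMeasurableSpace _ _ (MeasurableSpace.generateFrom RectK)
            (MeasurableSpace.generateFrom (Cyl n)) := by rw [← h1, ← h2]
      _ = MeasurableSpace.generateFrom (image2 (· ×ˢ ·) RectK (Cyl n)) :=
          generateFrom_prod_eq
            ⟨fun _ => univ, fun _ => ⟨fun _ => univ, by simp, by simp⟩, iUnion_const univ⟩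
            (isCountablySpanning_cyl n)
  refine ext_of_generate_finite _ hgen
    ((isPiSystem_pi).prod (isPiSystem_cyl n)) ?_ ?_
  · rintro _ ⟨A, ⟨s, hs, rfl⟩, B, ⟨l, u, hu, rfl⟩, rfl⟩
    have hsm : ∀ i, MeasurableSet (s i) := fun i => hs i (mem_univ i)
    have hA : MeasurableSet (univ.pi s) := MeasurableSet.univ_pi hsm
    have hB : MeasurableSet {t : ℕ → Par n | ∀ i : Fin l, t (i : ℕ) ∈ u i} :=
      cyl_measurableSet ⟨l, u, hu, rfl⟩
    rw [Measure.map_apply (measurable_initShift n k) (hA.prod hB), Measure.prod_prod,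
      Measure.pi_pi, hν.2 l u hu]
    set w : Fin (k + l) → Set (Par n) := fun i =>
      if h : (i : ℕ) < k then s ⟨i, h⟩ else u ⟨(i : ℕ) - k, by omega⟩ with hw
    have hwm : ∀ i, MeasurableSet (w i) := by
      intro i; rw [hw]; dsimp only; split
      · apply hsm
      · apply hu
    have hpre : initShift n k ⁻¹' (univ.pi s ×ˢ {t | ∀ i : Fin l, t (i : ℕ) ∈ u i}) =
        {t : ℕ → Par n | ∀ i : Fin (k + l), t (i : ℕ) ∈ w i} := by
      ext t
      constructor
      · intro ht i
        have h1 : ∀ i' : Fin k, t (i' : ℕ) ∈ s i' := fun i' => ht.1 i' (mem_univ i')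
        have h2 : ∀ i' : Fin l, t (k + (i' : ℕ)) ∈ u i' := ht.2
        show t (i : ℕ) ∈ w i
        rw [hw]; dsimp only
        split
        · next hh => exact h1 ⟨(i : ℕ), hh⟩
        · next hh =>
          have := h2 ⟨(i : ℕ) - k, by omega⟩
          simpa [Nat.add_sub_cancel' (le_of_not_gt hh)] using this
      · intro ht
        refine ⟨fun i' _ => ?_, fun i' => ?_⟩
        · have := ht ⟨(i' : ℕ), by omega⟩
          rw [hw] at this; dsimp only at this
          rw [dif_pos i'.isLt] at this
          simpa [initShift] using this
        · have := ht ⟨k + (i' : ℕ), by omega⟩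
          rw [hw] at this; dsimp only at this
          rw [dif_neg (by omega)] at this
          have he : (⟨k + (i' : ℕ) - k, by omega⟩ : Fin l) = i' := by
            apply Fin.ext; simp
          rw [he] at this
          exact this
    rw [hpre, hν.2 (k + l) w hwm, Fin.prod_univ_add]
    congr 1
    · refine Finset.prod_congr rfl fun i _ => ?_
      congr 1
      rw [hw]; dsimp only [Fin.coe_castAdd]
      rw [dif_pos i.isLt]
    · refine Finset.prod_congr rfl fun i _ => ?_
      congr 1
      rw [hw]; dsimp only [Fin.coe_natAdd]
      rw [dif_neg (by omega)]
      have he : (⟨k + (i : ℕ) - k, by omega⟩ : Fin l) = i := by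
        apply Fin.ext; simp
      rw [he]
  · simp

/-- Continuity of the perturbed iterations, jointly in the point and the noise. -/
lemma iterP_continuous {M : Type*} [TopologicalSpace M] {n : ℕ} {F : M → Par n → M}
    (hF : Continuous (Function.uncurry F)) (j : ℕ) :
    Continuous fun p : M × (ℕ → Par n) => iterP F j p.1 p.2 := by
  induction j with
  | zero => exact continuous_fst
  | succ j ih =>
    show Continuous fun p : M × (ℕ → Par n) =>
      Function.uncurry F (iterP F j p.1 p.2, p.2 j)
    exact hF.comp (ih.prodMk ((continuous_apply j).comp continuous_snd))

/-- `iterP` only depends on the initial segment of the noise. -/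
lemma iterP_congr {M : Type*} {n : ℕ} (F : M → Par n → M) (k : ℕ) (x : M)
    {t t' : ℕ → Par n} (h : ∀ i < k, t i = t' i) :
    iterP F k x t = iterP F k x t' := by
  induction k with
  | zero => rfl
  | succ k ih =>
    show F (iterP F k x t) (t k) = F (iterP F k x t') (t' k)
    rw [ih fun i hi => h i (Nat.lt_succ_of_lt hi), h k (Nat.lt_succ_self k)]

/-- Cocycle property of the perturbed iterations. -/
lemma iterP_add {M : Type*} {n : ℕ} (F : M → Par n → M) (k j : ℕ) (x : M)
    (t : ℕ → Par n) :
    iterP F (k + j) x t = iterP F j (iterP F k x t) (fun i => t (k + i)) := by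
  induction j with
  | zero => rfl
  | succ j ih =>
    show F (iterP F (k + j) x t) (t (k + j)) = _
    rw [ih]; rfl

/-- Unperturbed iterations coincide with the iterations of `f`. -/
lemma iterP_zero_noise {M : Type*} {n : ℕ} {F : M → Par n → M} {f : M → M}
    (hbase : ∀ x, F x 0 = f x) (k : ℕ) (x : M) :
    iterP F k x (fun _ => (0 : Par n)) = f^[k] x := by
  induction k with
  | zero => rfl
  | succ k ih =>
    show F (iterP F k x _) 0 = f^[k + 1] x
    rw [hbase, ih, Function.iterate_succ_apply']

/-- Boundedness of Cesàro averages. -/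
lemma avg_abs_le {a : ℕ → ℝ} {C : ℝ} (hC : 0 ≤ C) (h : ∀ j, |a j| ≤ C) (N : ℕ) :
    |(N : ℝ)⁻¹ * ∑ j ∈ Finset.range N, a j| ≤ C := by
  have h1 : |∑ j ∈ Finset.range N, a j| ≤ N * C := by
    calc |∑ j ∈ Finset.range N, a j| ≤ ∑ j ∈ Finset.range N, |a j| :=
          Finset.abs_sum_le_sum_abs _ _
      _ ≤ ∑ _j ∈ Finset.range N, C := Finset.sum_le_sum fun j _ => h j
      _ = N * C := by simp [mul_comm]
  rcases Nat.eq_zero_or_pos N with h0 | h0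
  · simp [h0, hC]
  · have hN : (0 : ℝ) < N := by exact_mod_cast h0
    rw [abs_mul, abs_inv, abs_of_nonneg hN.le]
    calc (N : ℝ)⁻¹ * |∑ j ∈ Finset.range N, a j| ≤ (N : ℝ)⁻¹ * (N * C) := by
          exact mul_le_mul_of_nonneg_left h1 (inv_nonneg.mpr hN.le)
      _ = C := by field_simp
  
/-- Cesàro convergence is insensitive to a shift of the sequence. -/
lemma cesaro_shift {a : ℕ → ℝ} {C : ℝ} (h : ∀ j, |a j| ≤ C) (k : ℕ) {c : ℝ}
    (hsh : Tendsto (fun N : ℕ => (N : ℝ)⁻¹ * ∑ j ∈ Finset.range N, a (k + j))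
      atTop (𝓝 c)) :
    Tendsto (fun N : ℕ => (N : ℝ)⁻¹ * ∑ j ∈ Finset.range N, a j) atTop (𝓝 c) := by
  have hC : 0 ≤ C := le_trans (abs_nonneg _) (h 0)
  have key : ∀ N : ℕ, (N : ℝ)⁻¹ * ∑ j ∈ Finset.range N, a j =
      (N : ℝ)⁻¹ * ∑ j ∈ Finset.range N, a (k + j) +
        (N : ℝ)⁻¹ * ((∑ j ∈ Finset.range k, a j) - ∑ j ∈ Finset.range k, a (N + j)) := by
    intro N
    have h1 : ∑ j ∈ Finset.range (N + k), a j =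
        ∑ j ∈ Finset.range N, a j + ∑ j ∈ Finset.range k, a (N + j) :=
      Finset.sum_range_add a N k
    have h2 : ∑ j ∈ Finset.range (k + N), a j =
        ∑ j ∈ Finset.range k, a j + ∑ j ∈ Finset.range N, a (k + j) :=
      Finset.sum_range_add a k N
    rw [Nat.add_comm k N] at h2
    have : ∑ j ∈ Finset.range N, a j =
        ∑ j ∈ Finset.range N, a (k + j) +
          ((∑ j ∈ Finset.range k, a j) - ∑ j ∈ Finset.range k, a (N + j)) := by
      linarith
    rw [this, mul_add]
  have hzero : Tendsto (fun N : ℕ => (N : ℝ)⁻¹ *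
      ((∑ j ∈ Finset.range k, a j) - ∑ j ∈ Finset.range k, a (N + j)))
      atTop (𝓝 0) := by
    have hb : ∀ N : ℕ, ‖(N : ℝ)⁻¹ *
        ((∑ j ∈ Finset.range k, a j) - ∑ j ∈ Finset.range k, a (N + j))‖ ≤
          (2 * k * C) / N := by
      intro N
      have hs1 : |∑ j ∈ Finset.range k, a j| ≤ k * C := by
        calc |∑ j ∈ Finset.range k, a j| ≤ ∑ j ∈ Finset.range k, |a j| :=
              Finset.abs_sum_le_sum_abs _ _
          _ ≤ ∑ _j ∈ Finset.range k, C := Finset.sum_le_sum fun j _ => h j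
          _ = k * C := by simp [mul_comm]
      have hs2 : |∑ j ∈ Finset.range k, a (N + j)| ≤ k * C := by
        calc |∑ j ∈ Finset.range k, a (N + j)| ≤ ∑ j ∈ Finset.range k, |a (N + j)| :=
              Finset.abs_sum_le_sum_abs _ _
          _ ≤ ∑ _j ∈ Finset.range k, C := Finset.sum_le_sum fun j _ => h _
          _ = k * C := by simp [mul_comm]
      rw [Real.norm_eq_abs, abs_mul, abs_inv, abs_of_nonneg (Nat.cast_nonneg N),
        div_eq_inv_mul]
      refine mul_le_mul_of_nonneg_left ?_ (inv_nonneg.mpr (Nat.cast_nonneg N))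
      calc |(∑ j ∈ Finset.range k, a j) - ∑ j ∈ Finset.range k, a (N + j)| ≤
            |∑ j ∈ Finset.range k, a j| + |∑ j ∈ Finset.range k, a (N + j)| :=
            abs_sub _ _
        _ ≤ k * C + k * C := add_le_add hs1 hs2
        _ = 2 * k * C := by ring
    exact squeeze_zero_norm hb (tendsto_const_div_atTop_nhds_zero_nat (2 * k * C))
  have := hsh.add hzero
  rw [add_zero] at this
  exact this.congr fun N => (key N).symm

end Aux

/-- **Theorem A, item 1.** Under Conditions A and B, for `m`-almost every `x` there are
`ε_x > 0` and an index `i = i(x)` such that for every `ε ∈ (0, ε_x)` the mean sojourn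
time `μ^ε(x)` exists and equals the localized physical measure `μ_i^ε`, and
`μ^ε(x) → μ_i` weakly* as `ε → 0⁺`. -/
theorem thmA_item1
    {d n : ℕ} {M : Type*} [MetricSpace M] [CompactSpace M]
    [ChartedSpace (EuclideanSpace ℝ (Fin d)) M] [IsManifold (𝓡 d) (⊤ : ℕ∞) M]
    [MeasurableSpace M] [BorelSpace M]
    (f : M → M) (m : Measure M) [IsProbabilityMeasure m] [m.IsOpenPosMeasure]
    (F : M → Par n → M) (ν : ℝ → Measure (ℕ → Par n))
    (K : ℝ → ℕ) (ξ : ℝ → ℝ) (ε₀ : ℝ)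
    (hF : IsPhysPert d f m F ν K ξ ε₀)
    {ι : Type} [Countable ι] (Λ : ι → Set M)
    (hdisj : ∀ i j, i ≠ j → Disjoint (Λ i) (Λ j))
    (hattr : ∀ i, IsAttractor f (Λ i))
    (hA : m ((⋃ i, basinAttr f (Λ i))ᶜ) = 0)
    (U : ι → Set M) (εthr : ι → ℝ) (με : ι → ℝ → Measure M) (μlim : ι → Measure M)
    (hloc : ∀ i, IsLocalizedPhysFamily F ν (Λ i) (U i) (εthr i) (με i))
    (hB : ∀ i, IsStochasticallyStable f (Λ i) (μlim i) (με i)) :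
    ∀ᵐ x ∂m, ∃ εx : ℝ, 0 < εx ∧ ∃ i : ι,
      (∀ ε ∈ Ioo (0 : ℝ) εx, SojournTime (ν ε) F x (με i ε)) ∧
      WeakStarAtZero (με i) (μlim i) := by
  have hcontF : Continuous (Function.uncurry F) := hF.smooth.continuous
  have hae : ∀ᵐ x ∂m, x ∈ ⋃ i, basinAttr f (Λ i) := by
    rw [ae_iff]
    exact hA
  filter_upwards [hae] with x hx
  obtain ⟨i, hxi⟩ := mem_iUnion.1 hx
  obtain ⟨hthr_pos, hUopen, hΛU, hper⟩ := hloc i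
  obtain ⟨x₀, hx₀, -⟩ := (hattr i).transitive
  obtain ⟨δ, hδ, hthick⟩ := (hattr i).compact.exists_thickening_subset_open hUopen hΛU
  have hten : Tendsto (fun k => infDist (f^[k] x) (Λ i)) atTop (𝓝 0) := hxi
  obtain ⟨k, hk⟩ : ∃ k, f^[k] x ∈ U i := by
    obtain ⟨k, hk⟩ := (hten.eventually (gt_mem_nhds hδ)).exists
    exact ⟨k, hthick ((mem_thickening_iff_infDist_lt ⟨x₀, hx₀⟩).2 hk)⟩
  set g : (Fin k → Par n) → M := fun s =>
    iterP F k x (fun j => if h : j < k then s ⟨j, h⟩ else 0) with hgdef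
  have hgC : Continuous g := by
    have hemb : Continuous fun s : Fin k → Par n =>
        ((fun j => if h : j < k then s ⟨j, h⟩ else 0) : ℕ → Par n) := by
      apply continuous_pi
      intro j
      by_cases h : j < k
      · simp only [dif_pos h]
        exact continuous_apply _
      · simp only [dif_neg h]
        exact continuous_const
    exact (iterP_continuous hcontF k).comp (continuous_const.prodMk hemb)
  have hg0 : g 0 ∈ U i := by
    have h1 : (fun j => if h : j < k then (0 : Fin k → Par n) ⟨j, h⟩ else 0) =
        fun _ : ℕ => (0 : Par n) := by
      funext j; split <;> rfl
    have h0 : g 0 = f^[k] x := by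
      show iterP F k x (fun j => if h : j < k then (0 : Fin k → Par n) ⟨j, h⟩ else 0)
        = f^[k] x
      rw [h1, iterP_zero_noise hF.base]
    rwa [h0]
  obtain ⟨ε₁, hε₁pos, hball⟩ : ∃ ε₁ > 0, ∀ s : Fin k → Par n, ‖s‖ < ε₁ → g s ∈ U i := by
    have hnhds : g ⁻¹' (U i) ∈ 𝓝 (0 : Fin k → Par n) :=
      hgC.continuousAt.preimage_mem_nhds (hUopen.mem_nhds hg0)
    obtain ⟨ε₁, hpos, hsub⟩ := Metric.mem_nhds_iff.1 hnhds
    exact ⟨ε₁, hpos, fun s hs => hsub (mem_ball_zero_iff.2 hs)⟩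
  refine ⟨min ε₀ (min (εthr i) ε₁),
    lt_min hF.eps0_mem.1 (lt_min hthr_pos hε₁pos), i, ?_, (hB i).2.2.2⟩
  intro ε hε φ
  have hε0 : ε ∈ Ioo (0 : ℝ) ε₀ := ⟨hε.1, lt_of_lt_of_le hε.2 (min_le_left _ _)⟩
  have hεthr : ε ∈ Ioo (0 : ℝ) (εthr i) :=
    ⟨hε.1, lt_of_lt_of_le hε.2 ((min_le_right _ _).trans (min_le_left _ _))⟩
  have hεε₁ : ε < ε₁ := lt_of_lt_of_le hε.2 ((min_le_right _ _).trans (min_le_right _ _))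
  have hνP := hF.noise ε hε0
  haveI hν1 : IsProbabilityMeasure (ν ε) := hνP.1
  haveI hβ1 : IsProbabilityMeasure (ballMeasure n ε) := ballMeasure_isProbability n hε.1
  set c := ∫ z, φ z ∂(με i ε) with hc
  have hct : ∀ (j : ℕ) (y : M), Continuous fun t : ℕ → Par n => φ (iterP F j y t) :=
    fun j y => φ.continuous.comp ((iterP_continuous hcontF j).comp (Continuous.prodMk_right y))
  have hInt : ∀ (j : ℕ) (y : M), Integrable (fun t => φ (iterP F j y t)) (ν ε) :=
    fun j y => ⟨(hct j y).aestronglyMeasurable,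
      HasFiniteIntegral.of_bounded (C := ‖φ‖)
        (Eventually.of_forall fun t => φ.norm_coe_le_norm _)⟩
  -- Step A: sojourn convergence for starting points inside `U i`.
  have hU : ∀ y ∈ U i, Tendsto (fun N : ℕ => (N : ℝ)⁻¹ *
      ∑ j ∈ Finset.range N, ∫ t, φ (iterP F j y t) ∂(ν ε)) atTop (𝓝 c) := by
    intro y hy
    have hAE : ∀ᵐ t ∂(ν ε), AvgTendsto F y t (με i ε) := (hper ε hεthr).2.2.2.2 y hy
    have hDCT := tendsto_integral_of_dominated_convergence (μ := ν ε)
      (F := fun N t => (N : ℝ)⁻¹ * ∑ j ∈ Finset.range N, φ (iterP F j y t))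
      (f := fun _ => c) (bound := fun _ => ‖φ‖)
      (fun N => (continuous_const.mul
        (continuous_finset_sum _ fun j _ => hct j y)).aestronglyMeasurable)
      (integrable_const _)
      (fun N => Eventually.of_forall fun t => by
        rw [Real.norm_eq_abs]
        exact avg_abs_le (norm_nonneg φ)
          (fun j => by rw [← Real.norm_eq_abs]; exact φ.norm_coe_le_norm _) N)
      (hAE.mono fun t ht => ht φ)
    simp only [integral_const, measure_univ, ENNReal.toReal_one, probReal_univ, one_smul] at hDCT
    refine Filter.Tendsto.congr (fun N => ?_) hDCT
    rw [integral_const_mul, integral_finset_sum _ fun j _ => hInt j y]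
  -- Step B: Fubini decomposition of the integrals after time `k`.
  have hmap := map_initShift hε.1 hνP k
  set π : Measure (Fin k → Par n) := Measure.pi fun _ : Fin k => ballMeasure n ε with hπ
  haveI hπ1 : IsProbabilityMeasure π := by rw [hπ]; infer_instance
  haveI : BorelSpace ((Fin k → Par n) × (ℕ → Par n)) := Prod.borelSpace
  have hctp : ∀ j : ℕ, Continuous fun p : (Fin k → Par n) × (ℕ → Par n) =>
      φ (iterP F j (g p.1) p.2) := fun j =>
    φ.continuous.comp ((iterP_continuous hcontF j).comp
      ((hgC.comp continuous_fst).prodMk continuous_snd))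
  have hIntP : ∀ j, Integrable (fun p : (Fin k → Par n) × (ℕ → Par n) =>
      φ (iterP F j (g p.1) p.2)) (π.prod (ν ε)) := fun j =>
    ⟨(hctp j).aestronglyMeasurable,
      HasFiniteIntegral.of_bounded (C := ‖φ‖)
        (Eventually.of_forall fun p => φ.norm_coe_le_norm _)⟩
  have key : ∀ j, ∫ t, φ (iterP F (k + j) x t) ∂(ν ε) =
      ∫ s, ∫ r, φ (iterP F j (g s) r) ∂(ν ε) ∂π := by
    intro j
    have hfun : ∀ t : ℕ → Par n, φ (iterP F (k + j) x t) =
        φ (iterP F j (g (initShift n k t).1) (initShift n k t).2) := by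
      intro t
      have hgt : g (fun i' : Fin k => t (i' : ℕ)) = iterP F k x t :=
        iterP_congr F k x fun i' hi' => by simp [hi']
      rw [iterP_add]
      show φ (iterP F j (iterP F k x t) fun i' => t (k + i')) = _
      rw [← hgt]
      rfl
    calc ∫ t, φ (iterP F (k + j) x t) ∂(ν ε)
        = ∫ t, (fun p : (Fin k → Par n) × (ℕ → Par n) =>
            φ (iterP F j (g p.1) p.2)) (initShift n k t) ∂(ν ε) := by
          simp only [hfun]
      _ = ∫ p, φ (iterP F j (g p.1) p.2) ∂((ν ε).map (initShift n k)) :=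
          (integral_map (measurable_initShift n k).aemeasurable
            (hctp j).aestronglyMeasurable).symm
      _ = ∫ p, φ (iterP F j (g p.1) p.2) ∂(π.prod (ν ε)) := by rw [hmap]
      _ = ∫ s, ∫ r, φ (iterP F j (g s) r) ∂(ν ε) ∂π := integral_prod _ (hIntP j)
  -- Step C: almost every initial noise segment sends `x` into `U i`.
  have hae_s : ∀ᵐ s ∂π, g s ∈ U i := by
    have hA1 : π (univ.pi fun _ : Fin k => closedBall (0 : Par n) ε) = 1 := by
      rw [hπ, Measure.pi_pi]
      simp [ballMeasure_closedBall n hε.1]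
    have hcomp : π ((univ.pi fun _ : Fin k => closedBall (0 : Par n) ε)ᶜ) = 0 := by
      rw [measure_compl (MeasurableSet.univ_pi fun _ => measurableSet_closedBall)
        (measure_ne_top π _), hA1, measure_univ, tsub_self]
    rw [ae_iff]
    refine measure_mono_null (fun s hs => ?_) hcomp
    simp only [mem_compl_iff]
    intro hmem
    apply hs
    have hnorm : ‖s‖ ≤ ε := (pi_norm_le_iff_of_nonneg hε.1.le).mpr fun i' =>
      mem_closedBall_zero_iff.mp (hmem i' (mem_univ i'))
    exact hball s (lt_of_le_of_lt hnorm hεε₁)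
  -- Step D: convergence of the shifted Cesàro averages.
  have hShift : Tendsto (fun N : ℕ => (N : ℝ)⁻¹ *
      ∑ j ∈ Finset.range N, ∫ t, φ (iterP F (k + j) x t) ∂(ν ε)) atTop (𝓝 c) := by
    simp only [key]
    have hIntG : ∀ j : ℕ, Integrable (fun s => ∫ r, φ (iterP F j (g s) r) ∂(ν ε)) π :=
      fun j => (hIntP j).integral_prod_left
    have hbound : ∀ (j : ℕ) (s : Fin k → Par n),
        |∫ r, φ (iterP F j (g s) r) ∂(ν ε)| ≤ ‖φ‖ := by
      intro j s
      rw [← Real.norm_eq_abs]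
      calc ‖∫ r, φ (iterP F j (g s) r) ∂(ν ε)‖ ≤ ‖φ‖ * ((ν ε) univ).toReal :=
            norm_integral_le_of_norm_le_const
              (Eventually.of_forall fun r => φ.norm_coe_le_norm _)
        _ = ‖φ‖ := by simp [measure_univ]
    have hDCT := tendsto_integral_of_dominated_convergence (μ := π)
      (F := fun N s => (N : ℝ)⁻¹ *
        ∑ j ∈ Finset.range N, ∫ r, φ (iterP F j (g s) r) ∂(ν ε))
      (f := fun _ => c) (bound := fun _ => ‖φ‖)
      (fun N => AEStronglyMeasurable.const_mul
        (Finset.aestronglyMeasurable_fun_sum _ fun j _ => (hIntG j).aestronglyMeasurable) _)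
      (integrable_const _)
      (fun N => Eventually.of_forall fun s => by
        rw [Real.norm_eq_abs]
        exact avg_abs_le (norm_nonneg φ) (fun j => hbound j s) N)
      (hae_s.mono fun s hs => hU (g s) hs)
    simp only [integral_const, measure_univ, ENNReal.toReal_one, probReal_univ, one_smul] at hDCT
    refine Filter.Tendsto.congr (fun N => ?_) hDCT
    rw [integral_const_mul, integral_finset_sum _ fun j _ => hIntG j]
  -- Step E: remove the initial segment from the Cesàro averages.
  have habs : ∀ j : ℕ, |∫ t, φ (iterP F j x t) ∂(ν ε)| ≤ ‖φ‖ := by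
    intro j
    rw [← Real.norm_eq_abs]
    calc ‖∫ t, φ (iterP F j x t) ∂(ν ε)‖ ≤ ‖φ‖ * ((ν ε) univ).toReal :=
          norm_integral_le_of_norm_le_const
            (Eventually.of_forall fun t => φ.norm_coe_le_norm _)
      _ = ‖φ‖ := by simp [measure_univ]
  exact cesaro_shift habs k hShift
end
end

section
/- Lemma (meaning of the coefficients): Let F be a physical random perturbation of a diffeomorphism f of a compact boundaryless finite-dimensional manifold M, fix ε ∈ (0,ε₀), and let μ_1,…,μ_l be the ergodic stationary measures with pairwise disjoint supports, μ_i(∂ supp μ_i) = 0, such that every stationary measure is a convex combination of them. Let x ∈ M and let μ(x) = α_1μ_1 + ⋯ + α_lμ_l be any weak* accumulation point of the sequence ((1/k)Σ_{j=0}^{k-1} f^j(x,·)_* ν_ε^∞)_{k≥1}. Then for each i = 1,…,l, α_i = ν_ε^∞{t̲ ∈ Δ_ε : there exists k ≥ 1 with f^k(x,t̲) ∈ supp μ_i}. -/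
open MeasureTheory Metric Filter Topology Set
open scoped Manifold ENNReal

noncomputable section

section AuxSupp

variable {X : Type*} [TopologicalSpace X] [MeasurableSpace X]

lemma isClosed_mSupp (μ : Measure X) : IsClosed (mSupp μ) := by
  rw [← isOpen_compl_iff]
  have h : (mSupp μ)ᶜ = ⋃₀ {U | IsOpen U ∧ μ U = 0} := by
    ext y
    simp only [mem_compl_iff, mSupp, mem_setOf_eq, not_forall, mem_sUnion]
    constructor
    · rintro ⟨U, hU, hy, hpos⟩
      exact ⟨U, ⟨hU, by simpa [not_lt, le_zero_iff] using hpos⟩, hy⟩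
    · rintro ⟨U, ⟨hU, hU0⟩, hy⟩
      exact ⟨U, hU, hy, by simp [hU0]⟩
  rw [h]
  exact isOpen_sUnion fun U hU => hU.1

lemma mSupp_compl_null [SecondCountableTopology X] (μ : Measure X) :
    μ (mSupp μ)ᶜ = 0 := by
  have h : (mSupp μ)ᶜ = ⋃₀ {U | IsOpen U ∧ μ U = 0} := by
    ext y
    simp only [mem_compl_iff, mSupp, mem_setOf_eq, not_forall, mem_sUnion]
    constructor
    · rintro ⟨U, hU, hy, hpos⟩
      exact ⟨U, ⟨hU, by simpa [not_lt, le_zero_iff] using hpos⟩, hy⟩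
    · rintro ⟨U, ⟨hU, hU0⟩, hy⟩
      exact ⟨U, hU, hy, by simp [hU0]⟩
  obtain ⟨T, hTc, hTsub, hTeq⟩ :=
    TopologicalSpace.isOpen_sUnion_countable {U | IsOpen U ∧ μ U = 0} (fun U hU => hU.1)
  rw [h, ← hTeq]
  exact (measure_sUnion_null_iff hTc).2 fun U hU => (hTsub hU).2

end AuxSupp

lemma continuous_iterP {M : Type*} [TopologicalSpace M] {n : ℕ} {F : M → Par n → M}
    (hF : Continuous (Function.uncurry F)) (j : ℕ) (x : M) :
    Continuous (fun t : ℕ → Par n => iterP F j x t) := by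
  induction j with
  | zero => exact continuous_const
  | succ k ih =>
    have : (fun t : ℕ → Par n => iterP F (k + 1) x t)
        = fun t => Function.uncurry F (iterP F k x t, t k) := rfl
    rw [this]
    exact hF.comp (ih.prodMk (continuous_apply k))


/-- **Meaning of the coefficients.** Let `μ_1, …, μ_l` be the ergodic stationary measures
(pairwise disjoint supports forward invariant under every `f_t`, null support boundaries,
every stationary measure a convex combination of them). If
`μ(x) = α_1 μ_1 + ⋯ + α_l μ_l` is a weak* accumulation point of the averaged
pushforwards `(1/k) ∑_{j<k} f^j(x,·)_* ν_ε^∞`, then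
`α_i = ν_ε^∞ {t̲ : ∃ k ≥ 1, f^k(x,t̲) ∈ supp μ_i}` for each `i`. -/
theorem coefficients_meaning
    {d n : ℕ} {M : Type*} [MetricSpace M] [CompactSpace M]
    [ChartedSpace (EuclideanSpace ℝ (Fin d)) M] [IsManifold (𝓡 d) (⊤ : ℕ∞) M]
    [MeasurableSpace M] [BorelSpace M]
    (f : M → M) (m : Measure M) [IsProbabilityMeasure m] [m.IsOpenPosMeasure]
    (F : M → Par n → M) (ν : ℝ → Measure (ℕ → Par n))
    (K : ℝ → ℕ) (ξ : ℝ → ℝ) (ε₀ : ℝ)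
    (hF : IsPhysPert d f m F ν K ξ ε₀)
    (ε : ℝ) (hε : ε ∈ Ioo (0 : ℝ) ε₀)
    {l : ℕ} (μs : Fin l → Measure M)
    (hprob : ∀ i, IsProbabilityMeasure (μs i))
    (herg : ∀ i, Ergodic (skewProd F) ((μs i).prod (ν ε)))
    (hdisj : ∀ i j, i ≠ j → mSupp (μs i) ∩ mSupp (μs j) = ∅)
    (hbd : ∀ i, μs i (frontier (mSupp (μs i))) = 0)
    (hinv : ∀ i, ∀ t : Par n, ‖t‖ ≤ ε →
      (fun x => F x t) '' mSupp (μs i) ⊆ mSupp (μs i))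
    (hdecomp : ∀ μ : Measure M, IsProbabilityMeasure μ →
      (μ.prod (ν ε)).map (skewProd F) = μ.prod (ν ε) →
      ∃ α : Fin l → ℝ, (∀ i, 0 ≤ α i) ∧ (∑ i, α i = 1) ∧
        μ = ∑ i, ENNReal.ofReal (α i) • μs i)
    (x : M) (α : Fin l → ℝ) (hα : ∀ i, 0 ≤ α i) (hα1 : ∑ i, α i = 1)
    (hacc : ∃ k : ℕ → ℕ, StrictMono k ∧ ∀ φ : C(M, ℝ),
      Tendsto
        (fun h : ℕ => ((k h : ℝ))⁻¹ *
          ∑ j ∈ Finset.range (k h), ∫ t, φ (iterP F j x t) ∂(ν ε))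
        atTop (𝓝 (∑ i, α i * ∫ y, φ y ∂(μs i)))) :
    ∀ i, ENNReal.ofReal (α i) =
      (ν ε) {t : ℕ → Par n | ∃ k : ℕ, 1 ≤ k ∧ iterP F k x t ∈ mSupp (μs i)} := by

  classical
  obtain ⟨hε0, hεlt⟩ := hε
  obtain ⟨k, hkmono, hconv⟩ := hacc
  obtain ⟨hνprob, hcyl⟩ := hF.noise ε ⟨hε0, hεlt⟩
  haveI : IsProbabilityMeasure (ν ε) := hνprob
  have hFc : Continuous (Function.uncurry F) := hF.smooth.continuous
  set g : ℕ → (ℕ → Par n) → M := fun j t => iterP F j x t with hg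
  have hgc : ∀ j, Continuous (g j) := fun j => continuous_iterP hFc j x
  have hgm : ∀ j, Measurable (g j) := fun j => (hgc j).measurable
  -- the Delta set has full measure
  have hCyl : ∀ j : ℕ, ν ε {t : ℕ → Par n | ‖t j‖ ≤ ε} = 1 := by
    intro j
    have hball : ballMeasure n ε (closedBall (0 : Par n) ε) = 1 := by
      rw [ballMeasure, Measure.smul_apply, Measure.restrict_apply measurableSet_closedBall,
        inter_self, smul_eq_mul]
      exact ENNReal.inv_mul_cancel (measure_closedBall_pos volume 0 hε0).ne'
        measure_closedBall_lt_top.ne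
    have huniv : ballMeasure n ε (univ : Set (Par n)) = 1 := by
      rw [ballMeasure, Measure.smul_apply, Measure.restrict_apply_univ, smul_eq_mul]
      exact ENNReal.inv_mul_cancel (measure_closedBall_pos volume 0 hε0).ne'
        measure_closedBall_lt_top.ne
    set s : Fin (j + 1) → Set (Par n) :=
      fun i => if (i : ℕ) = j then closedBall (0 : Par n) ε else univ with hs
    have hsm : ∀ i, MeasurableSet (s i) := by
      intro i
      by_cases h : (i : ℕ) = j <;> simp [hs, h, measurableSet_closedBall]
    have hset : {t : ℕ → Par n | ∀ i : Fin (j + 1), t (i : ℕ) ∈ s i}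
        = {t : ℕ → Par n | ‖t j‖ ≤ ε} := by
      ext t
      simp only [mem_setOf_eq]
      constructor
      · intro h
        have := h ⟨j, Nat.lt_succ_self j⟩
        simpa [hs, mem_closedBall, dist_zero_right] using this
      · intro h i
        by_cases hij : (i : ℕ) = j
        · simpa [hs, hij, mem_closedBall, dist_zero_right] using h
        · simp [hs, hij]
    have := hcyl (j + 1) s hsm
    rw [hset] at this
    rw [this]
    rw [Finset.prod_eq_one]
    intro i _
    by_cases h : (i : ℕ) = j <;> simp [hs, h, hball, huniv]
  have hDeltaEq : Delta n ε = ⋂ j : ℕ, {t : ℕ → Par n | ‖t j‖ ≤ ε} := by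
    ext t; simp [Delta, mem_iInter]
  have hDeltaClosed : IsClosed (Delta n ε) := by
    rw [hDeltaEq]
    refine isClosed_iInter fun j => ?_
    have : {t : ℕ → Par n | ‖t j‖ ≤ ε} = (fun t : ℕ → Par n => t j) ⁻¹' closedBall 0 ε := by
      ext t; simp [mem_closedBall, dist_zero_right]
    rw [this]
    exact IsClosed.preimage (continuous_apply j) Metric.isClosed_closedBall
  have hDeltaMeas : MeasurableSet (Delta n ε) := hDeltaClosed.measurableSet
  have hDeltaCompl : ν ε (Delta n ε)ᶜ = 0 := by
    rw [hDeltaEq, compl_iInter]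
    refine measure_iUnion_null fun j => ?_
    have hm : MeasurableSet {t : ℕ → Par n | ‖t j‖ ≤ ε} := by
      have : {t : ℕ → Par n | ‖t j‖ ≤ ε} = (fun t : ℕ → Par n => t j) ⁻¹' closedBall 0 ε := by
        ext t; simp [mem_closedBall, dist_zero_right]
      rw [this]
      exact (IsClosed.preimage (continuous_apply j) Metric.isClosed_closedBall).measurableSet
    rw [measure_compl hm (measure_ne_top _ _), hCyl j, measure_univ, tsub_self]
  intro i
  set A : Set M := mSupp (μs i) with hA
  have hAclosed : IsClosed A := isClosed_mSupp _
  have hAmeas : MeasurableSet A := hAclosed.measurableSet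
  -- the increasing sets S j
  set S : ℕ → Set (ℕ → Par n) := fun j => g j ⁻¹' A ∩ Delta n ε with hS
  have hstep : ∀ j, S j ⊆ S (j + 1) := by
    intro j t ht
    obtain ⟨htA, htD⟩ := ht
    refine ⟨?_, htD⟩
    have : iterP F (j + 1) x t = F (iterP F j x t) (t j) := rfl
    show iterP F (j + 1) x t ∈ A
    rw [this]
    exact hinv i (t j) (htD j) (mem_image_of_mem _ htA)
  have hSmono : Monotone S := monotone_nat_of_le_succ hstep
  -- target set measure
  have hTarget : (ν ε) {t : ℕ → Par n | ∃ k : ℕ, 1 ≤ k ∧ iterP F k x t ∈ mSupp (μs i)}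
      = ν ε (⋃ j, S j) := by
    have h1 : {t : ℕ → Par n | ∃ k : ℕ, 1 ≤ k ∧ iterP F k x t ∈ mSupp (μs i)} ∩ Delta n ε
        = ⋃ j, S (j + 1) := by
      ext t
      simp only [mem_inter_iff, mem_setOf_eq, mem_iUnion, hS, mem_preimage]
      constructor
      · rintro ⟨⟨c, hc1, hcA⟩, hD⟩
        obtain ⟨j, rfl⟩ := Nat.exists_eq_add_of_le hc1
        exact ⟨j, by simpa [Nat.add_comm] using hcA, hD⟩
      · rintro ⟨j, hjA, hD⟩
        exact ⟨⟨j + 1, Nat.succ_le_succ (Nat.zero_le j), hjA⟩, hD⟩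
    have h2 : (⋃ j, S (j + 1)) = ⋃ j, S j := by
      apply subset_antisymm
      · exact iUnion_mono' fun j => ⟨j + 1, subset_rfl⟩
      · exact iUnion_mono' fun j => ⟨j, hSmono (Nat.le_succ j)⟩
    rw [← measure_inter_conull hDeltaCompl, h1, h2]
  -- monotone convergence for the S j
  have hL : Tendsto (fun j => ν ε (S j)) atTop (𝓝 (ν ε (⋃ j, S j))) :=
    tendsto_measure_iUnion_atTop hSmono
  set L : ℝ≥0∞ := ν ε (⋃ j, S j) with hLdef
  have hLne : L ≠ ⊤ := measure_ne_top _ _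
  have hLreal : Tendsto (fun j => (ν ε (S j)).toReal) atTop (𝓝 L.toReal) :=
    (ENNReal.tendsto_toReal hLne).comp hL
  have hSj_eq : ∀ j, ν ε (S j) = ν ε (g j ⁻¹' A) := fun j =>
    measure_inter_conull hDeltaCompl
  -- Cesàro averages converge to L.toReal, also along the subsequence k ∘ (· + 1)
  have hces : Tendsto
      (fun N : ℕ => (N : ℝ)⁻¹ * ∑ j ∈ Finset.range N, (ν ε (S j)).toReal)
      atTop (𝓝 L.toReal) := hLreal.cesaro
  have hksub : Tendsto (fun h : ℕ => k (h + 1)) atTop atTop :=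
    hkmono.tendsto_atTop.comp (tendsto_add_atTop_nat 1)
  have hcesk : Tendsto
      (fun h : ℕ => ((k (h + 1) : ℝ))⁻¹ *
        ∑ j ∈ Finset.range (k (h + 1)), (ν ε (S j)).toReal)
      atTop (𝓝 L.toReal) := hces.comp hksub
  -- the probability measures P h and Q
  have hkpos : ∀ h : ℕ, (k (h + 1) : ℝ≥0∞) ≠ 0 := by
    intro h
    have : 1 ≤ k (h + 1) := le_trans (Nat.succ_le_succ (Nat.zero_le h)) hkmono.le_apply
    exact_mod_cast Nat.one_le_iff_ne_zero.mp this
  set P : ℕ → Measure M := fun h =>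
    ((k (h + 1) : ℝ≥0∞))⁻¹ • ∑ j ∈ Finset.range (k (h + 1)), Measure.map (g j) (ν ε)
    with hP
  have hPmapprob : ∀ j : ℕ, IsProbabilityMeasure (Measure.map (g j) (ν ε)) := fun j =>
    Measure.isProbabilityMeasure_map (hgm j).aemeasurable
  have hPprob : ∀ h, IsProbabilityMeasure (P h) := by
    intro h
    constructor
    rw [hP]
    simp only [Measure.smul_apply, Measure.coe_finset_sum, Finset.sum_apply, smul_eq_mul]
    rw [Finset.sum_congr rfl (fun j _ => measure_univ), Finset.sum_const,
      Finset.card_range, nsmul_eq_mul, mul_one]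
    exact ENNReal.inv_mul_cancel (hkpos h) (ENNReal.natCast_ne_top _)
  set Q : Measure M := ∑ j, ENNReal.ofReal (α j) • μs j with hQ
  have hQsummandFin : ∀ j : Fin l, IsFiniteMeasure (ENNReal.ofReal (α j) • μs j) := by
    intro j
    constructor
    rw [Measure.smul_apply, smul_eq_mul, (hprob j).measure_univ, mul_one]
    exact ENNReal.ofReal_lt_top
  haveI hQprob : IsProbabilityMeasure Q := by
    constructor
    rw [hQ]
    simp only [Measure.coe_finset_sum, Finset.sum_apply, Measure.smul_apply, smul_eq_mul]
    rw [Finset.sum_congr rfl (fun j _ => by rw [(hprob j).measure_univ, mul_one]),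
      ← ENNReal.ofReal_sum_of_nonneg (fun j _ => hα j), hα1, ENNReal.ofReal_one]
  set Pp : ℕ → ProbabilityMeasure M := fun h => ⟨P h, hPprob h⟩ with hPp
  set Qp : ProbabilityMeasure M := ⟨Q, hQprob⟩ with hQp
  -- weak convergence of P h to Q
  have hweak : Tendsto Pp atTop (𝓝 Qp) := by
    rw [MeasureTheory.ProbabilityMeasure.tendsto_iff_forall_integral_tendsto]
    intro f
    have hint : ∀ (μ' : Measure M), IsFiniteMeasure μ' → Integrable (⇑f) μ' := fun μ' h => by
      haveI := h
      exact f.integrable μ'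
    have hintmap : ∀ j : ℕ, Integrable (⇑f) (Measure.map (g j) (ν ε)) := fun j => by
      have hfin : IsFiniteMeasure (Measure.map (g j) (ν ε)) :=
        ⟨by rw [(hPmapprob j).measure_univ]; exact ENNReal.one_lt_top⟩
      exact hint (Measure.map (g j) (ν ε)) hfin
    have hPint : ∀ h : ℕ, ∫ ω, f ω ∂(Pp h : Measure M)
        = ((k (h + 1) : ℝ))⁻¹ * ∑ j ∈ Finset.range (k (h + 1)),
            ∫ t, f (iterP F j x t) ∂(ν ε) := by
      intro h
      have : (Pp h : Measure M) = P h := rfl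
      rw [this, hP]
      rw [integral_smul_measure]
      rw [integral_finset_sum_measure (fun j _ => hintmap j)]
      rw [ENNReal.toReal_inv, ENNReal.toReal_natCast, smul_eq_mul]
      congr 1
      refine Finset.sum_congr rfl fun j _ => ?_
      exact integral_map (hgm j).aemeasurable f.continuous.aestronglyMeasurable
    have hQint : ∫ ω, f ω ∂(Qp : Measure M) = ∑ j, α j * ∫ y, f y ∂(μs j) := by
      have : (Qp : Measure M) = Q := rfl
      rw [this, hQ]
      rw [integral_finset_sum_measure (fun j _ => hint _ (hQsummandFin j))]
      refine Finset.sum_congr rfl fun j _ => ?_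
      rw [integral_smul_measure, ENNReal.toReal_ofReal (hα j), smul_eq_mul]
    rw [hQint]
    have := (hconv f.toContinuousMap).comp (tendsto_add_atTop_nat 1)
    simp only [Function.comp_def] at this ⊢
    refine Tendsto.congr (fun h => ?_) this
    exact (hPint h).symm
  -- null frontier of A under Q
  have hsuppj : ∀ j : Fin l, j ≠ i → μs j A = 0 := by
    intro j hj
    have hdisj' := hdisj i j (fun h => hj h.symm)
    have hsub : A ⊆ (mSupp (μs j))ᶜ := fun y hy hy' =>
      (eq_empty_iff_forall_notMem.mp hdisj' y) ⟨hy, hy'⟩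
    exact measure_mono_null hsub (mSupp_compl_null (μs j))
  have hnull : Q (frontier A) = 0 := by
    rw [hQ]
    simp only [Measure.coe_finset_sum, Finset.sum_apply, Measure.smul_apply, smul_eq_mul]
    refine Finset.sum_eq_zero fun j _ => ?_
    by_cases hj : j = i
    · subst hj; rw [hbd j, mul_zero]
    · have : μs j (frontier A) = 0 :=
        measure_mono_null (le_trans (frontier_subset_closure)
          (by rw [hAclosed.closure_eq])) (hsuppj j hj)
      rw [this, mul_zero]
  -- portmanteau
  have hport : Tendsto (fun h => (Pp h : Measure M) A) atTop (𝓝 (Q A)) := by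
    have := MeasureTheory.ProbabilityMeasure.tendsto_measure_of_null_frontier_of_tendsto'
      hweak (E := A) (by exact hnull)
    exact this
  have hportReal : Tendsto (fun h => ((Pp h : Measure M) A).toReal) atTop (𝓝 (Q A).toReal) :=
    (ENNReal.tendsto_toReal (ne_top_of_le_ne_top
      (by rw [hQprob.measure_univ]; exact ENNReal.one_ne_top)
      (measure_mono (subset_univ A)))).comp hport
  -- identify the two sequences
  have hPA : ∀ h : ℕ, ((Pp h : Measure M) A).toReal
      = ((k (h + 1) : ℝ))⁻¹ * ∑ j ∈ Finset.range (k (h + 1)), (ν ε (S j)).toReal := by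
    intro h
    have : (Pp h : Measure M) = P h := rfl
    rw [this, hP]
    simp only [Measure.smul_apply, Measure.coe_finset_sum, Finset.sum_apply, smul_eq_mul]
    rw [ENNReal.toReal_mul, ENNReal.toReal_inv, ENNReal.toReal_natCast]
    congr 1
    rw [ENNReal.toReal_sum (fun j _ => ne_top_of_le_ne_top
      (by rw [(hPmapprob j).measure_univ]; exact ENNReal.one_ne_top)
      (measure_mono (subset_univ A)))]
    refine Finset.sum_congr rfl fun j _ => ?_
    rw [Measure.map_apply (hgm j) hAmeas, hSj_eq j]
  have hfinal : (Q A).toReal = L.toReal := by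
    refine tendsto_nhds_unique ?_ hcesk
    exact hportReal.congr fun h => hPA h
  -- compute Q A
  have hQA : Q A = ENNReal.ofReal (α i) := by
    rw [hQ]
    simp only [Measure.coe_finset_sum, Finset.sum_apply, Measure.smul_apply, smul_eq_mul]
    have hA1 : μs i A = 1 := by
      have hc : μs i Aᶜ = 0 := mSupp_compl_null (μs i)
      have hadd := measure_add_measure_compl (μ := μs i) hAmeas
      rw [hc, add_zero, (hprob i).measure_univ] at hadd
      exact hadd
    rw [Finset.sum_eq_single_of_mem i (Finset.mem_univ i)
      (fun j _ hj => by rw [hsuppj j hj, mul_zero]), hA1, mul_one]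
  rw [hTarget]
  rw [hQA] at hfinal
  exact ((ENNReal.toReal_eq_toReal_iff' ENNReal.ofReal_ne_top hLne).mp hfinal)
end
end
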